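/- arXiv:1307.2136 — 2 statements merged into one kernel-verified Lean document; each statement's English description precedes it below -/
import Mathlib

section
/- The matrices U and V defined by U_{i,j} = √(2/(N+1/2)) cos(2(i−1/2)(N−j+1/2)π/(2N+1)) and V_{i,j} = (−1)^{j+1} √(2/(N+1/2)) sin(2ijπ/(2N+1)) are orthogonal N×N matrices. -/
open Matrix Real

/-- U_{i,j} = √(2/(N+1/2)) cos(2(i−1/2)(N−j+1/2)π/(2N+1)), 1-based indices i = i₀+1, j = j₀+1. -/
noncomputable def Umat (N : ℕ) : Matrix (Fin N) (Fin N) ℝ :=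
  Matrix.of fun i j =>
    Real.sqrt (2 / ((N : ℝ) + 1 / 2)) *
      Real.cos (2 * ((i : ℝ) + 1 / 2) * ((N : ℝ) - (j : ℝ) - 1 / 2) * π / (2 * (N : ℝ) + 1))

/-- V_{i,j} = (−1)^{j+1} √(2/(N+1/2)) sin(2ijπ/(2N+1)), 1-based indices
(so with 0-based j₀, (−1)^{j+1} = (−1)^{j₀}). -/
noncomputable def Vmat (N : ℕ) : Matrix (Fin N) (Fin N) ℝ :=
  Matrix.of fun i j =>
    (-1 : ℝ) ^ (j : ℕ) * Real.sqrt (2 / ((N : ℝ) + 1 / 2)) *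
      Real.sin (2 * ((i : ℝ) + 1) * ((j : ℝ) + 1) * π / (2 * (N : ℝ) + 1))

/-!
With `θ = tπ/(2N+1)`, the entries of `UᵀU` and `VᵀV` are, by the product-to-sum formulas,
combinations of the sums `∑_{i<N} cos((2i+1)θ)` and `∑_{i<N} cos(2(i+1)θ)`. Multiplied by
`2 sin θ` these telescope to `sin(2Nθ)` and `sin((2N+1)θ) - sin θ`, which for `t ∈ ℤ` equal
`-(-1)^t sin θ` and `-sin θ`. So unless `2N+1 ∣ t` the two sums are `-(-1)^t/2` and `-1/2`.
On the diagonal one of the two sums has `t = 0` and equals `N`, giving `2/(2N+1) · (N + 1/2) = 1`;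
off the diagonal the two sums cancel, for `U` because the two values of `t` have opposite parity.
-/

open Finset

lemma two_mul_sin_mul_sum_range_cos_odd (n : ℕ) (θ : ℝ) :
    2 * sin θ * ∑ i ∈ range n, cos ((2 * i + 1) * θ) = sin (2 * n * θ) := by
  induction n with
  | zero => simp
  | succ n ih =>
    rw [sum_range_succ, mul_add, ih, two_mul_sin_mul_cos,
      show θ - (2 * n + 1) * θ = -(2 * n * θ) by ring,
      show θ + (2 * n + 1) * θ = 2 * (n + 1) * θ by ring, sin_neg]
    push_cast
    ring

lemma two_mul_sin_mul_sum_range_cos_even (n : ℕ) (θ : ℝ) :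
    2 * sin θ * ∑ i ∈ range n, cos (2 * (i + 1) * θ) = sin ((2 * n + 1) * θ) - sin θ := by
  induction n with
  | zero => simp
  | succ n ih =>
    rw [sum_range_succ, mul_add, ih, two_mul_sin_mul_cos,
      show θ - 2 * (n + 1) * θ = -((2 * n + 1) * θ) by ring,
      show θ + 2 * (n + 1) * θ = (2 * (n + 1) + 1) * θ by ring, sin_neg]
    push_cast
    ring

lemma sin_int_mul_pi_div_ne_zero {M : ℕ} {t : ℤ} (hM : M ≠ 0) (ht : ¬ (M : ℤ) ∣ t) :
    sin (t * π / M) ≠ 0 := by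
  rw [sin_ne_zero_iff]
  intro n hn
  rw [eq_div_iff (by positivity), mul_right_comm, mul_left_inj' pi_ne_zero] at hn
  exact ht ⟨n, by exact_mod_cast hn.symm.trans (mul_comm _ _)⟩

lemma neg_one_zpow_add_neg_one_zpow_of_odd {a b : ℤ} (h : Odd (a + b)) :
    (-1 : ℝ) ^ a + (-1) ^ b = 0 := by
  rcases Int.even_or_odd a with ha | ha
  · rw [ha.neg_one_zpow, ((Int.odd_add'.mp h).mpr ha).neg_one_zpow]
    norm_num
  · rw [ha.neg_one_zpow, ((Int.odd_add.mp h).mp ha).neg_one_zpow]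
    norm_num

noncomputable def oddCosSum (N : ℕ) (t : ℤ) : ℝ :=
  ∑ i ∈ range N, cos ((2 * i + 1) * (t * π / (2 * N + 1)))

noncomputable def evenCosSum (N : ℕ) (t : ℤ) : ℝ :=
  ∑ i ∈ range N, cos (2 * (i + 1) * (t * π / (2 * N + 1)))

lemma oddCosSum_zero (N : ℕ) : oddCosSum N 0 = N := by
  simp [oddCosSum]

lemma evenCosSum_zero (N : ℕ) : evenCosSum N 0 = N := by
  simp [evenCosSum]

lemma sin_int_mul_pi_div_two_mul_add_one_ne_zero {N : ℕ} {t : ℤ}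
    (ht : ¬ (2 * N + 1 : ℤ) ∣ t) : sin (t * π / (2 * N + 1)) ≠ 0 := by
  exact_mod_cast sin_int_mul_pi_div_ne_zero (M := 2 * N + 1) (by omega) (by exact_mod_cast ht)

lemma oddCosSum_of_not_dvd {N : ℕ} {t : ℤ} (ht : ¬ (2 * N + 1 : ℤ) ∣ t) :
    oddCosSum N t = -(-1) ^ t / 2 := by
  have hM : (2 * N + 1 : ℝ) ≠ 0 := by positivity
  have hs := sin_int_mul_pi_div_two_mul_add_one_ne_zero ht
  refine mul_left_cancel₀ (mul_ne_zero two_ne_zero hs) ?_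
  rw [oddCosSum, two_mul_sin_mul_sum_range_cos_odd,
    show 2 * N * (t * π / (2 * N + 1)) = t * π - t * π / (2 * N + 1) by field_simp; ring,
    sin_int_mul_pi_sub]
  ring

lemma evenCosSum_of_not_dvd {N : ℕ} {t : ℤ} (ht : ¬ (2 * N + 1 : ℤ) ∣ t) :
    evenCosSum N t = -1 / 2 := by
  have hM : (2 * N + 1 : ℝ) ≠ 0 := by positivity
  have hs := sin_int_mul_pi_div_two_mul_add_one_ne_zero ht
  refine mul_left_cancel₀ (mul_ne_zero two_ne_zero hs) ?_
  rw [evenCosSum, two_mul_sin_mul_sum_range_cos_even,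
    show (2 * N + 1) * (t * π / (2 * N + 1)) = t * π by field_simp, sin_int_mul_pi]
  ring

lemma not_dvd_of_ne_zero_of_neg_lt_of_lt {M t : ℤ} (h0 : t ≠ 0) (hlo : -M < t) (hhi : t < M) :
    ¬ M ∣ t :=
  fun h => h0 (Int.eq_zero_of_abs_lt_dvd h (abs_lt.mpr ⟨hlo, hhi⟩))

lemma sqrt_two_div_mul_self (N : ℕ) :
    √(2 / ((N : ℝ) + 1 / 2)) * √(2 / ((N : ℝ) + 1 / 2)) = 4 / (2 * N + 1) := by
  rw [mul_self_sqrt (by positivity)]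
  field_simp
  ring

lemma Umat_transpose_mul_apply (N : ℕ) (j k : Fin N) :
    ((Umat N)ᵀ * Umat N) j k =
      2 / (2 * N + 1) * (oddCosSum N (k - j) + oddCosSum N (2 * N - 1 - j - k)) := by
  rw [mul_apply, oddCosSum, oddCosSum, ← sum_add_distrib, mul_sum, ← Fin.sum_univ_eq_sum_range]
  refine sum_congr rfl fun i _ => ?_
  simp only [Umat, transpose_apply, of_apply]
  rw [mul_mul_mul_comm, sqrt_two_div_mul_self,
    show (4 : ℝ) / (2 * N + 1) = 2 / (2 * N + 1) * 2 by ring, mul_assoc, ← mul_assoc 2,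
    two_mul_cos_mul_cos]
  congr 3 <;> push_cast <;> ring

lemma Vmat_transpose_mul_apply (N : ℕ) (j k : Fin N) :
    ((Vmat N)ᵀ * Vmat N) j k = (-1) ^ (j + k : ℕ) * (2 / (2 * N + 1)) *
      (evenCosSum N (j - k) - evenCosSum N (j + k + 2)) := by
  rw [mul_apply, evenCosSum, evenCosSum, ← sum_sub_distrib, mul_sum, ← Fin.sum_univ_eq_sum_range]
  refine sum_congr rfl fun i _ => ?_
  simp only [Vmat, transpose_apply, of_apply]
  rw [mul_mul_mul_comm, mul_mul_mul_comm _ √_, ← pow_add, sqrt_two_div_mul_self,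
    show (4 : ℝ) / (2 * N + 1) = 2 / (2 * N + 1) * 2 by ring, ← mul_assoc _ (2 / _) 2,
    mul_assoc _ 2, ← mul_assoc 2, two_mul_sin_mul_sin]
  congr 3 <;> push_cast <;> ring

theorem Umat_transpose_mul_self (N : ℕ) : (Umat N)ᵀ * Umat N = 1 := by
  ext j k
  have hM : (2 * N + 1 : ℝ) ≠ 0 := by positivity
  have hj := j.isLt
  have hk := k.isLt
  have hjk_sum : ¬ (2 * N + 1 : ℤ) ∣ 2 * N - 1 - j - k :=
    not_dvd_of_ne_zero_of_neg_lt_of_lt (by omega) (by omega) (by omega)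
  rw [Umat_transpose_mul_apply, one_apply]
  split_ifs with hjk
  · subst hjk
    rw [sub_self, oddCosSum_zero, oddCosSum_of_not_dvd hjk_sum,
      Odd.neg_one_zpow ⟨N - 1 - j, by ring⟩]
    field_simp
  · have hjk_diff : ¬ (2 * N + 1 : ℤ) ∣ k - j :=
      not_dvd_of_ne_zero_of_neg_lt_of_lt (by omega) (by omega) (by omega)
    have hcancel := neg_one_zpow_add_neg_one_zpow_of_odd
      (a := k - j) (b := 2 * N - 1 - j - k) ⟨N - 1 - j, by ring⟩
    rw [oddCosSum_of_not_dvd hjk_diff, oddCosSum_of_not_dvd hjk_sum]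
    linear_combination (-1 / (2 * N + 1) : ℝ) * hcancel

theorem Vmat_transpose_mul_self (N : ℕ) : (Vmat N)ᵀ * Vmat N = 1 := by
  ext j k
  have hM : (2 * N + 1 : ℝ) ≠ 0 := by positivity
  have hj := j.isLt
  have hk := k.isLt
  have hjk_sum : ¬ (2 * N + 1 : ℤ) ∣ j + k + 2 :=
    not_dvd_of_ne_zero_of_neg_lt_of_lt (by omega) (by omega) (by omega)
  rw [Vmat_transpose_mul_apply, one_apply, evenCosSum_of_not_dvd hjk_sum]
  split_ifs with hjk
  · subst hjk
    rw [sub_self, evenCosSum_zero, Even.neg_one_pow ⟨j, rfl⟩]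
    field_simp
    ring
  · have hjk_diff : ¬ (2 * N + 1 : ℤ) ∣ j - k :=
      not_dvd_of_ne_zero_of_neg_lt_of_lt (by omega) (by omega) (by omega)
    rw [evenCosSum_of_not_dvd hjk_diff, sub_self, mul_zero]

theorem U_V_orthogonal_general (N : ℕ) :
    (Umat N)ᵀ * Umat N = 1 ∧ (Vmat N)ᵀ * Vmat N = 1 :=
  ⟨Umat_transpose_mul_self N, Vmat_transpose_mul_self N⟩

/-- The matrices U and V are orthogonal: UᵀU = I and VᵀV = I. -/
theorem U_V_orthogonal (N : ℕ) (hN : 1 ≤ N) :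
    (Umat N)ᵀ * Umat N = 1 ∧ (Vmat N)ᵀ * Vmat N = 1 :=
  U_V_orthogonal_general N
end

section
/- Let F ∈ ℝ^{N×d} be an (r,C,α)-frame, let B̃ ∈ ℝ^{m×N} satisfy (1−ε)‖x‖₂ ≤ ‖B̃x‖₂ for all x in the column span of D^{−r}F, and suppose u ∈ ℝ^N satisfies ‖u‖_∞ ≤ K and D^r u = F x − q. Then ‖x − (B̃D^{−r}F)^† B̃ D^{−r} q‖₂ ≤ K · N^{1−α} / (C(1−ε)). -/
/-!
Write `M = D⁻ʳF` and `A = B̃M`. The hypotheses give `‖Az‖ ≥ (1 - ε)·C·N^α·‖z‖`, so `A` has full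
column rank, and the state equation gives `Ax - B̃D⁻ʳq = B̃u`. For the least-squares solution
`A†b` the normal equations make `A(x - A†b)` the orthogonal projection of `Ax - b` onto the range
of `A`, whence `(1 - ε)·C·N^α·‖x - A†b‖ ≤ ‖B̃u‖`. Finally every entry of `B̃u` is at most
`N·K/√m` in absolute value, so `‖B̃u‖ ≤ N·K`.
-/

open Matrix

/-- The Euclidean (ℓ₂) norm of a vector in ℝⁿ. -/
noncomputable def enorm {n : ℕ} (x : Fin n → ℝ) : ℝ := Real.sqrt (∑ i, x i ^ 2)

/-- The N×N lower bidiagonal difference matrix. -/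
def Dmat (N : ℕ) : Matrix (Fin N) (Fin N) ℝ :=
  Matrix.of fun i j => if (i : ℕ) = (j : ℕ) then 1 else if (i : ℕ) = (j : ℕ) + 1 then -1 else 0

/-- The Moore–Penrose pseudoinverse (AᵀA)⁻¹Aᵀ of a full column rank matrix. -/
noncomputable def pinv {m d : ℕ} (A : Matrix (Fin m) (Fin d) ℝ) : Matrix (Fin d) (Fin m) ℝ :=
  (Aᵀ * A)⁻¹ * Aᵀ

section EuclideanNorm

variable {n : ℕ}

lemma enorm_nonneg (x : Fin n → ℝ) : 0 ≤ _root_.enorm x := Real.sqrt_nonneg _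

lemma enorm_sq (x : Fin n → ℝ) : _root_.enorm x ^ 2 = x ⬝ᵥ x := by
  rw [_root_.enorm, Real.sq_sqrt (Finset.sum_nonneg fun i _ => sq_nonneg (x i))]
  simp only [dotProduct, sq]

lemma enorm_eq_zero_iff {x : Fin n → ℝ} : _root_.enorm x = 0 ↔ x = 0 := by
  rw [← sq_eq_zero_iff, enorm_sq, dotProduct_self_eq_zero]

lemma dotProduct_le_enorm_mul_enorm (x y : Fin n → ℝ) :
    x ⬝ᵥ y ≤ _root_.enorm x * _root_.enorm y :=
  Real.sum_mul_le_sqrt_mul_sqrt _ x y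

lemma enorm_le_of_dotProduct_self_le {x y : Fin n → ℝ} (h : x ⬝ᵥ x ≤ x ⬝ᵥ y) :
    _root_.enorm x ≤ _root_.enorm y := by
  have h' := h.trans (dotProduct_le_enorm_mul_enorm x y)
  rw [← enorm_sq] at h'
  nlinarith [enorm_nonneg x, enorm_nonneg y]

lemma enorm_le_sqrt_mul_of_abs_le {x : Fin n → ℝ} {c : ℝ} (hc : 0 ≤ c) (h : ∀ i, |x i| ≤ c) :
    _root_.enorm x ≤ √n * c := by
  have hsum : ∑ i, x i ^ 2 ≤ n * c ^ 2 := by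
    simpa using Finset.sum_le_sum fun i (_ : i ∈ Finset.univ) =>
      sq_le_sq' (abs_le.1 (h i)).1 (abs_le.1 (h i)).2
  calc _root_.enorm x ≤ √(n * c ^ 2) := Real.sqrt_le_sqrt hsum
    _ = √n * c := by rw [Real.sqrt_mul n.cast_nonneg, Real.sqrt_sq hc]

end EuclideanNorm

lemma isUnit_det_transpose_mul_self {ι κ : Type*} [Fintype ι] [Fintype κ] [DecidableEq κ]
    (A : Matrix ι κ ℝ) (hA : Function.Injective A.mulVec) : IsUnit (Aᵀ * A).det := by
  rw [← isUnit_iff_isUnit_det, ← mulVec_injective_iff_isUnit]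
  have hker := ker_mulVecLin_transpose_mul_self A
  rw [(LinearMap.ker_eq_bot (f := A.mulVecLin)).2 hA] at hker
  exact LinearMap.ker_eq_bot.1 hker

section LeastSquares

variable {m d : ℕ} (A : Matrix (Fin m) (Fin d) ℝ)

lemma transpose_mulVec_mulVec_pinv_mulVec (hA : IsUnit (Aᵀ * A).det) (b : Fin m → ℝ) :
    Aᵀ *ᵥ (A *ᵥ (pinv A *ᵥ b)) = Aᵀ *ᵥ b := by
  rw [mulVec_mulVec, mulVec_mulVec, pinv, ← Matrix.mul_assoc, mul_nonsing_inv _ hA,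
    Matrix.one_mul]

lemma enorm_mulVec_sub_pinv_mulVec_le (hA : IsUnit (Aᵀ * A).det) (x : Fin d → ℝ)
    (b : Fin m → ℝ) : _root_.enorm (A *ᵥ (x - pinv A *ᵥ b)) ≤ _root_.enorm (A *ᵥ x - b) := by
  set w := x - pinv A *ᵥ b
  have hnormal : Aᵀ *ᵥ (A *ᵥ w) = Aᵀ *ᵥ (A *ᵥ x - b) := by
    rw [mulVec_sub, mulVec_sub, mulVec_sub, transpose_mulVec_mulVec_pinv_mulVec A hA]
  apply enorm_le_of_dotProduct_self_le
  have h := congrArg (w ⬝ᵥ ·) hnormal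
  simp only [dotProduct_transpose_mulVec] at h
  rw [h, dotProduct_comm]

theorem enorm_sub_pinv_mulVec_le {c : ℝ} (hc : 0 < c)
    (hA : ∀ z, c * _root_.enorm z ≤ _root_.enorm (A *ᵥ z)) (x : Fin d → ℝ) (b : Fin m → ℝ) :
    _root_.enorm (x - pinv A *ᵥ b) ≤ _root_.enorm (A *ᵥ x - b) / c := by
  have hinj : Function.Injective A.mulVec := by
    refine (injective_iff_map_eq_zero A.mulVecLin).2 fun z hz => ?_
    have hz' := hA z
    rw [← mulVecLin_apply, hz, enorm_eq_zero_iff.2 rfl] at hz'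
    exact enorm_eq_zero_iff.1 (le_antisymm (nonpos_of_mul_nonpos_right hz' hc) (enorm_nonneg z))
  rw [le_div_iff₀' hc]
  exact (hA _).trans
    (enorm_mulVec_sub_pinv_mulVec_le A (isUnit_det_transpose_mul_self A hinj) x b)

end LeastSquares

lemma det_Dmat (N : ℕ) : (Dmat N).det = 1 := by
  have h : (Dmat N).IsLowerTriangular := fun i j hij => by
    have hij : (i : ℕ) < j := OrderDual.toDual_lt_toDual.1 hij
    simp only [Dmat, of_apply]
    rw [if_neg (by omega), if_neg (by omega)]
  rw [det_of_isLowerTriangular _ h]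
  exact Finset.prod_eq_one fun i _ => by simp [Dmat]

lemma Dmat_inv_pow_mul_pow (N r : ℕ) : (Dmat N)⁻¹ ^ r * Dmat N ^ r = 1 := by
  rw [inv_pow', nonsing_inv_mul]
  simp [det_pow, det_Dmat]

lemma abs_mulVec_apply_le {ι κ : Type*} [Fintype κ] {B : Matrix ι κ ℝ} {u : κ → ℝ} {b K : ℝ}
    (hB : ∀ i j, |B i j| ≤ b) (hu : ∀ j, |u j| ≤ K) (i : ι) :
    |(B *ᵥ u) i| ≤ Fintype.card κ * (b * K) :=
  calc |(B *ᵥ u) i| ≤ ∑ j, |B i j * u j| := Finset.abs_sum_le_sum_abs _ _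
    _ ≤ ∑ _j : κ, b * K := Finset.sum_le_sum fun j _ => by
        rw [abs_mul]
        exact mul_le_mul (hB i j) (hu j) (abs_nonneg _) ((abs_nonneg _).trans (hB i j))
    _ = Fintype.card κ * (b * K) := by simp

lemma enorm_inv_sqrt_smul_mulVec_le {m N : ℕ} (hm : 0 < m) {B : Matrix (Fin m) (Fin N) ℝ}
    (hB : ∀ i j, B i j = 1 ∨ B i j = -1) {u : Fin N → ℝ} {K : ℝ} (hK : 0 ≤ K)
    (hu : ∀ j, |u j| ≤ K) : _root_.enorm (((1 / √m) • B) *ᵥ u) ≤ N * K := by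
  have hsqrt : 0 < √(m : ℝ) := Real.sqrt_pos.2 (Nat.cast_pos.2 hm)
  have hentry : ∀ i j, |((1 / √m) • B) i j| ≤ 1 / √m := fun i j => by
    rcases hB i j with h | h <;> simp [h, abs_of_pos hsqrt]
  calc _root_.enorm (((1 / √m) • B) *ᵥ u) ≤ √m * (N * (1 / √m * K)) := by
        refine enorm_le_sqrt_mul_of_abs_le (by positivity) ?_
        simpa using abs_mulVec_apply_le hentry hu
    _ = N * K := by field_simp

theorem bernoulli_encoded_sigma_delta_error_general (m N d r : ℕ) (hm : 0 < m) (hN : 0 < N)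
    (ε Cc α K : ℝ) (hε1 : ε < 1) (hC : 0 < Cc) (hK : 0 ≤ K)
    (F : Matrix (Fin N) (Fin d) ℝ)
    -- (r,C,α)-frame conditions:
    (hFσ : ∀ z : Fin d → ℝ,
      Cc * (N : ℝ) ^ α * _root_.enorm z ≤ _root_.enorm ((((Dmat N)⁻¹) ^ r * F) *ᵥ z))
    -- B̃ = B/√m with B a sign matrix:
    (B : Matrix (Fin m) (Fin N) ℝ) (hB : ∀ i j, B i j = 1 ∨ B i j = -1)
    (Bt : Matrix (Fin m) (Fin N) ℝ) (hBt : Bt = (1 / Real.sqrt m) • B)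
    -- B̃ is a lower near-isometry on the column span of D^{−r}F:
    (hJL : ∀ z : Fin d → ℝ,
      (1 - ε) * _root_.enorm ((((Dmat N)⁻¹) ^ r * F) *ᵥ z) ≤
        _root_.enorm (Bt *ᵥ ((((Dmat N)⁻¹) ^ r * F) *ᵥ z)))
    -- the ΣΔ state equation and stability bound:
    (x : Fin d → ℝ) (q u : Fin N → ℝ)
    (hu : ∀ i, |u i| ≤ K)
    (hstate : (Dmat N) ^ r *ᵥ u = F *ᵥ x - q) :
    _root_.enorm (x - pinv (Bt * (((Dmat N)⁻¹) ^ r * F)) *ᵥ (Bt *ᵥ (((Dmat N)⁻¹) ^ r *ᵥ q))) ≤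
      K * (N : ℝ) ^ (1 - α) / (Cc * (1 - ε)) := by
  have hNα : 0 < (N : ℝ) ^ α := Real.rpow_pos_of_pos (Nat.cast_pos.2 hN) α
  have hc : 0 < (1 - ε) * (Cc * (N : ℝ) ^ α) := mul_pos (by linarith) (mul_pos hC hNα)
  have hlower : ∀ z, (1 - ε) * (Cc * (N : ℝ) ^ α) * _root_.enorm z ≤
      _root_.enorm ((Bt * ((Dmat N)⁻¹ ^ r * F)) *ᵥ z) := fun z => by
    rw [← mulVec_mulVec, mul_assoc]
    exact (mul_le_mul_of_nonneg_left (hFσ z) (by linarith)).trans (hJL z)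
  have hstate' : (Dmat N)⁻¹ ^ r *ᵥ (F *ᵥ x - q) = u := by
    rw [← hstate, mulVec_mulVec, Dmat_inv_pow_mul_pow, one_mulVec]
  have hresidual :
      (Bt * ((Dmat N)⁻¹ ^ r * F)) *ᵥ x - Bt *ᵥ ((Dmat N)⁻¹ ^ r *ᵥ q) = Bt *ᵥ u := by
    rw [← mulVec_mulVec, ← mulVec_mulVec, ← mulVec_sub, ← mulVec_sub, hstate']
  calc _ ≤ _root_.enorm (Bt *ᵥ u) / ((1 - ε) * (Cc * (N : ℝ) ^ α)) := by
        rw [← hresidual]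
        exact enorm_sub_pinv_mulVec_le _ hc hlower x _
    _ ≤ N * K / ((1 - ε) * (Cc * (N : ℝ) ^ α)) := by
        gcongr
        exact hBt ▸ enorm_inv_sqrt_smul_mulVec_le hm hB hK hu
    _ = K * (N : ℝ) ^ (1 - α) / (Cc * (1 - ε)) := by
        rw [Real.rpow_sub (Nat.cast_pos.2 hN), Real.rpow_one]
        field_simp

/-- Reconstruction error for ΣΔ quantization of an (r,C,α)-frame expansion, encoded with a
renormalized Bernoulli matrix B̃ = B/√m which is a lower near-isometry on the column span of
D^{−r}F: if ‖u‖_∞ ≤ K and D^r u = Fx − q, then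
‖x − (B̃D^{−r}F)† B̃D^{−r}q‖₂ ≤ K·N^{1−α}/(C(1−ε)). -/
theorem bernoulli_encoded_sigma_delta_error (m N d r : ℕ) (hm : 0 < m) (hN : 0 < N)
    (ε Cc α K : ℝ) (hε0 : 0 < ε) (hε1 : ε < 1) (hC : 0 < Cc) (hα : 1 < α) (hK : 0 ≤ K)
    (F : Matrix (Fin N) (Fin d) ℝ)
    -- (r,C,α)-frame conditions:
    (hFbdd : ∀ z : Fin d → ℝ, _root_.enorm z ≤ 1 → ∀ i : Fin N, |(F *ᵥ z) i| ≤ 1)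
    (hFσ : ∀ z : Fin d → ℝ,
      Cc * (N : ℝ) ^ α * _root_.enorm z ≤ _root_.enorm ((((Dmat N)⁻¹) ^ r * F) *ᵥ z))
    -- B̃ = B/√m with B a sign matrix:
    (B : Matrix (Fin m) (Fin N) ℝ) (hB : ∀ i j, B i j = 1 ∨ B i j = -1)
    (Bt : Matrix (Fin m) (Fin N) ℝ) (hBt : Bt = (1 / Real.sqrt m) • B)
    -- B̃ is a lower near-isometry on the column span of D^{−r}F:
    (hJL : ∀ z : Fin d → ℝ,
      (1 - ε) * _root_.enorm ((((Dmat N)⁻¹) ^ r * F) *ᵥ z) ≤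
        _root_.enorm (Bt *ᵥ ((((Dmat N)⁻¹) ^ r * F) *ᵥ z)))
    -- the ΣΔ state equation and stability bound:
    (x : Fin d → ℝ) (q u : Fin N → ℝ)
    (hu : ∀ i, |u i| ≤ K)
    (hstate : (Dmat N) ^ r *ᵥ u = F *ᵥ x - q) :
    _root_.enorm (x - pinv (Bt * (((Dmat N)⁻¹) ^ r * F)) *ᵥ (Bt *ᵥ (((Dmat N)⁻¹) ^ r *ᵥ q))) ≤
      K * (N : ℝ) ^ (1 - α) / (Cc * (1 - ε)) :=
  bernoulli_encoded_sigma_delta_error_general m N d r hm hN ε Cc α K hε1 hC hK F hFσ B hB Bt hBt hJL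
    x q u hu hstate
end
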